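/- Let p be prime and A, B, C, D ⊆ F_p^* with cardinalities A, B, C, D, and M = max{B, C, D}. If the weights satisfy |α_a| ≤ 1 and |β_{b,c,d}| ≤ 1, and χ is a nontrivial multiplicative character of F_p, then |∑_{a,b,c,d} α_a β_{b,c,d} χ(a+b+cd)| ≤ ABCD · sqrt(p/(A·M)). -/

import Mathlib

/-!
Put `T v = ∑ₐ αₐ χ(a + v)`, so that the sum is `∑_{b,c,d} β_{bcd} T(b + cd)`. By Cauchy–Schwarz its
square is at most `BCD · ∑_{b,c,d} |T(b + cd)|²`. Fixing the two of `b, c, d` that do not range over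
the largest set, the third is determined by `b + cd` (as `c, d ≠ 0`), so every `v` is hit at most
`BCD / M` times and `∑_{b,c,d} |T(b + cd)|² ≤ (BCD / M) ∑_v |T v|²`. Finally the shifts `χ(a + ·)`
are almost orthogonal: for `a ≠ a'` their correlation is a Jacobi sum `J(χ, χ⁻¹)` up to a unit
factor, equal to `-1`, whence `∑_v |T v|² = p ∑ |αₐ|² - |∑ αₐ|² ≤ pA`.
-/

open Finset

namespace MulChar

variable {F R : Type*} [Field F] [Fintype F] [CommRing R] [IsDomain R]

theorem sum_mul_inv_apply_add {χ : MulChar F R} (hχ : χ ≠ 1) {w : F} (hw : w ≠ 0) :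
    ∑ v, χ v * χ⁻¹ (v + w) = -1 := by
  have hunit : χ w * χ⁻¹ w = 1 := by
    rw [inv_apply', ← map_mul, mul_inv_cancel₀ hw, map_one]
  calc ∑ v, χ v * χ⁻¹ (v + w)
      = ∑ x, χ (-w * x) * χ⁻¹ (-w * x + w) :=
        (Fintype.sum_equiv (Equiv.mulLeft₀ (-w) (neg_ne_zero.mpr hw)) _ _ fun _ => rfl).symm
    _ = ∑ x, χ (-1) * (χ w * χ⁻¹ w) * (χ x * χ⁻¹ (1 - x)) := by
        refine sum_congr rfl fun x _ => ?_
        rw [show -w * x + w = w * (1 - x) by ring, show -w * x = -1 * w * x by ring,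
          map_mul, map_mul, map_mul]
        ring
    _ = χ (-1) * jacobiSum χ χ⁻¹ := by rw [hunit, mul_one, jacobiSum, mul_sum]
    _ = -1 := by
        rw [jacobiSum_nontrivial_inv hχ, mul_neg, ← map_mul, neg_one_mul, neg_neg, map_one]

theorem sum_apply_add_mul_inv_apply_add [DecidableEq F] {χ : MulChar F R} (hχ : χ ≠ 1) (a a' : F) :
    ∑ v, χ (a + v) * χ⁻¹ (a' + v) = (if a = a' then (Fintype.card F : R) else 0) - 1 := by
  calc ∑ v, χ (a + v) * χ⁻¹ (a' + v) = ∑ v, χ v * χ⁻¹ (v + (a' - a)) :=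
        Fintype.sum_equiv (Equiv.addLeft a) _ _ fun v => by simp only [Equiv.coe_addLeft]; ring_nf
    _ = _ := by
        split_ifs with h
        · simp only [h, sub_self, add_zero, ← mul_apply, mul_inv_cancel, sum_one_eq_card_units,
            Fintype.card_units, Nat.cast_sub Fintype.card_pos, Nat.cast_one]
        · rw [sum_mul_inv_apply_add hχ (sub_ne_zero.mpr (Ne.symm h)), zero_sub]

theorem sum_norm_sq_sum_mul_apply_add {χ : MulChar F ℂ} (hχ : χ ≠ 1) (A : Finset F) (α : F → ℂ) :
    ∑ v, ‖∑ a ∈ A, α a * χ (a + v)‖ ^ 2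
      = Fintype.card F * ∑ a ∈ A, ‖α a‖ ^ 2 - ‖∑ a ∈ A, α a‖ ^ 2 := by
  classical
  have hconj : ∀ x, (starRingEnd ℂ) (χ x) = χ⁻¹ x := star_apply' χ
  apply Complex.ofReal_injective
  push_cast
  simp only [← Complex.mul_conj']
  calc ∑ v, (∑ a ∈ A, α a * χ (a + v)) * (starRingEnd ℂ) (∑ a ∈ A, α a * χ (a + v))
      = ∑ v, ∑ a ∈ A, ∑ a' ∈ A, α a * (starRingEnd ℂ) (α a') * (χ (a + v) * χ⁻¹ (a' + v)) := by
        simp only [map_sum, map_mul, hconj, sum_mul_sum]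
        refine sum_congr rfl fun v _ => sum_congr rfl fun a _ => sum_congr rfl fun a' _ => ?_
        ring
    _ = ∑ a ∈ A, ∑ a' ∈ A, α a * (starRingEnd ℂ) (α a')
          * ((if a = a' then (Fintype.card F : ℂ) else 0) - 1) := by
        rw [sum_comm]
        refine sum_congr rfl fun a _ => ?_
        rw [sum_comm]
        refine sum_congr rfl fun a' _ => ?_
        rw [← mul_sum, sum_apply_add_mul_inv_apply_add hχ]
    _ = Fintype.card F * ∑ a ∈ A, α a * (starRingEnd ℂ) (α a)
          - (∑ a ∈ A, α a) * (starRingEnd ℂ) (∑ a ∈ A, α a) := by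
        simp only [mul_sub, mul_one, mul_ite, mul_zero, sum_sub_distrib, map_sum, sum_mul_sum]
        congr 1
        rw [mul_sum]
        refine sum_congr rfl fun a ha => ?_
        rw [sum_ite_eq_of_mem A a _ ha]
        ring

theorem sum_norm_sq_sum_mul_apply_add_le {χ : MulChar F ℂ} (hχ : χ ≠ 1) (A : Finset F)
    (α : F → ℂ) :
    ∑ v, ‖∑ a ∈ A, α a * χ (a + v)‖ ^ 2 ≤ Fintype.card F * ∑ a ∈ A, ‖α a‖ ^ 2 := by
  rw [sum_norm_sq_sum_mul_apply_add hχ]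
  exact sub_le_self _ (sq_nonneg _)

end MulChar

theorem Finset.sum_sum_comp_le_card_mul_sum {ι κ V : Type*} [Fintype V] {g : V → ℝ}
    (hg : ∀ v, 0 ≤ g v) {s : Finset ι} {t : Finset κ} {f : ι → κ → V}
    (hf : ∀ i ∈ s, Set.InjOn (f i) t) :
    ∑ i ∈ s, ∑ j ∈ t, g (f i j) ≤ #s * ∑ v, g v := by
  classical
  calc ∑ i ∈ s, ∑ j ∈ t, g (f i j) ≤ ∑ _i ∈ s, ∑ v, g v :=
        sum_le_sum fun i hi => by
          rw [← sum_image (hf i hi)]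
          exact sum_le_univ_sum_of_nonneg hg
    _ = #s * ∑ v, g v := by rw [sum_const, nsmul_eq_mul]

theorem max_card_mul_sum_add_mul_le {F : Type*} [Field F] [Fintype F] {g : F → ℝ}
    (hg : ∀ v, 0 ≤ g v) (B : Finset F) {C D : Finset F} (hC : 0 ∉ C) (hD : 0 ∉ D) :
    ((max (max #B #C) #D : ℕ) : ℝ) * ∑ b ∈ B, ∑ c ∈ C, ∑ d ∈ D, g (b + c * d)
      ≤ #B * #C * #D * ∑ v, g v := by
  set S := ∑ b ∈ B, ∑ c ∈ C, ∑ d ∈ D, g (b + c * d)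
  have hB' : S ≤ #C * #D * ∑ v, g v := by
    calc S = ∑ x ∈ C ×ˢ D, ∑ b ∈ B, g (b + x.1 * x.2) := by
          rw [sum_product]
          exact sum_comm.trans (sum_congr rfl fun c _ => sum_comm)
      _ ≤ #C * #D * ∑ v, g v := by
          rw [← Nat.cast_mul, ← card_product]
          exact sum_sum_comp_le_card_mul_sum hg fun x _ => (add_left_injective _).injOn
  have hC' : S ≤ #B * #D * ∑ v, g v := by
    calc S = ∑ x ∈ B ×ˢ D, ∑ c ∈ C, g (x.1 + c * x.2) := by
          rw [sum_product]
          exact sum_congr rfl fun b _ => sum_comm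
      _ ≤ #B * #D * ∑ v, g v := by
          rw [← Nat.cast_mul, ← card_product]
          refine sum_sum_comp_le_card_mul_sum hg fun x hx c₁ _ c₂ _ h => ?_
          have hd : x.2 ≠ 0 := fun h0 => hD (h0 ▸ (mem_product.mp hx).2)
          exact mul_right_cancel₀ hd (add_left_cancel h)
  have hD' : S ≤ #B * #C * ∑ v, g v := by
    calc S = ∑ x ∈ B ×ˢ C, ∑ d ∈ D, g (x.1 + x.2 * d) := by rw [sum_product]
      _ ≤ #B * #C * ∑ v, g v := by
          rw [← Nat.cast_mul, ← card_product]
          refine sum_sum_comp_le_card_mul_sum hg fun x hx d₁ _ d₂ _ h => ?_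
          have hc : x.2 ≠ 0 := fun h0 => hC (h0 ▸ (mem_product.mp hx).2)
          exact mul_left_cancel₀ hc (add_left_cancel h)
  rcases max_cases (max #B #C) #D with ⟨hM, -⟩ | ⟨hM, -⟩
  · rcases max_cases #B #C with ⟨hM', -⟩ | ⟨hM', -⟩
    · rw [hM, hM']
      nlinarith [mul_le_mul_of_nonneg_left hB' (Nat.cast_nonneg (α := ℝ) #B)]
    · rw [hM, hM']
      nlinarith [mul_le_mul_of_nonneg_left hC' (Nat.cast_nonneg (α := ℝ) #C)]
  · rw [hM]
    nlinarith [mul_le_mul_of_nonneg_left hD' (Nat.cast_nonneg (α := ℝ) #D)]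

theorem Finset.sq_sum_sum_sum_le_card_mul_sum_sum_sum_sq {α β γ : Type*} (B : Finset α)
    (C : Finset β) (D : Finset γ) (f : α → β → γ → ℝ) :
    (∑ b ∈ B, ∑ c ∈ C, ∑ d ∈ D, f b c d) ^ 2
      ≤ #B * #C * #D * ∑ b ∈ B, ∑ c ∈ C, ∑ d ∈ D, f b c d ^ 2 := by
  simpa only [sum_product, card_product, Nat.cast_mul, mul_assoc] using
    sq_sum_le_card_mul_sum_sq (s := B ×ˢ C ×ˢ D) (f := fun x => f x.1 x.2.1 x.2.2)

theorem le_mul_sqrt_div_of_sq_le_of_mul_le {s t a m n P : ℝ} (hs : s ^ 2 ≤ n * t)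
    (ht : m * t ≤ n * (P * a)) (ha : 0 ≤ a) (hm : 0 ≤ m) (hn : 0 ≤ n)
    (hnm : m = 0 → n = 0) :
    s ≤ a * n * Real.sqrt (P / (a * m)) := by
  rw [← Real.sqrt_sq (by positivity : 0 ≤ a * n), ← Real.sqrt_mul (sq_nonneg _)]
  refine (le_abs_self s).trans (Real.abs_le_sqrt ?_)
  rcases hm.eq_or_lt with rfl | hm
  · rw [mul_zero, div_zero, mul_zero]
    simpa only [hnm rfl, zero_mul] using hs
  rcases ha.eq_or_lt with rfl | ha
  · have ht' : t ≤ 0 := nonpos_of_mul_nonpos_right (by simpa using ht) hm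
    simp only [zero_mul, div_zero, mul_zero]
    nlinarith [mul_nonpos_of_nonneg_of_nonpos hn ht']
  rw [mul_div_assoc', le_div_iff₀ (by positivity)]
  nlinarith [mul_le_mul_of_nonneg_left hs (by positivity : 0 ≤ a * m),
    mul_le_mul_of_nonneg_left ht (by positivity : 0 ≤ a * n)]

theorem norm_sum_le_sum_norm_sum_mul_apply_add_add_mul {R : Type*} [CommRing R]
    (A B C D : Finset R) (α : R → ℂ) (β : R → R → R → ℂ) (f : R → ℂ)
    (hβ : ∀ b ∈ B, ∀ c ∈ C, ∀ d ∈ D, ‖β b c d‖ ≤ 1) :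
    ‖∑ a ∈ A, ∑ b ∈ B, ∑ c ∈ C, ∑ d ∈ D, α a * β b c d * f (a + b + c * d)‖
      ≤ ∑ b ∈ B, ∑ c ∈ C, ∑ d ∈ D, ‖∑ a ∈ A, α a * f (a + (b + c * d))‖ := by
  have hregroup : ∑ a ∈ A, ∑ b ∈ B, ∑ c ∈ C, ∑ d ∈ D, α a * β b c d * f (a + b + c * d)
      = ∑ b ∈ B, ∑ c ∈ C, ∑ d ∈ D, β b c d * ∑ a ∈ A, α a * f (a + (b + c * d)) := by
    simp only [mul_sum]
    rw [sum_comm]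
    refine sum_congr rfl fun b _ => ?_
    rw [sum_comm]
    refine sum_congr rfl fun c _ => ?_
    rw [sum_comm]
    refine sum_congr rfl fun d _ => sum_congr rfl fun a _ => ?_
    rw [add_assoc]
    ring
  rw [hregroup]
  refine (norm_sum_le _ _).trans (sum_le_sum fun b hb => (norm_sum_le _ _).trans
    (sum_le_sum fun c hc => (norm_sum_le _ _).trans (sum_le_sum fun d hd => ?_)))
  rw [norm_mul]
  exact mul_le_of_le_one_left (norm_nonneg _) (hβ b hb c hc d hd)

theorem stmt12_general {p : ℕ} [Fact p.Prime] (χ : MulChar (ZMod p) ℂ) (hχ : χ ≠ 1)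
    (A B C D : Finset (ZMod p))
    (hC : (0 : ZMod p) ∉ C) (hD : (0 : ZMod p) ∉ D)
    (α : ZMod p → ℂ) (β : ZMod p → ZMod p → ZMod p → ℂ)
    (hα : ∀ a ∈ A, ‖α a‖ ≤ 1)
    (hβ : ∀ b ∈ B, ∀ c ∈ C, ∀ d ∈ D, ‖β b c d‖ ≤ 1) :
    ‖∑ a ∈ A, ∑ b ∈ B, ∑ c ∈ C, ∑ d ∈ D,
        α a * β b c d * χ (a + b + c * d)‖ ≤
      (A.card : ℝ) * B.card * C.card * D.card *
        Real.sqrt ((p : ℝ) /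
          ((A.card : ℝ) * (max (max B.card C.card) D.card : ℕ))) := by
  set T : ZMod p → ℝ := fun v => ‖∑ a ∈ A, α a * χ (a + v)‖
  have hT : ∑ v, T v ^ 2 ≤ p * (A.card : ℝ) := by
    refine (MulChar.sum_norm_sq_sum_mul_apply_add_le hχ A α).trans ?_
    rw [ZMod.card]
    gcongr
    simpa using sum_le_card_nsmul A _ 1 fun a ha => pow_le_one₀ (norm_nonneg _) (hα a ha)
  rw [show (A.card : ℝ) * B.card * C.card * D.card = A.card * (B.card * C.card * D.card) by
    ring]
  refine le_mul_sqrt_div_of_sq_le_of_mul_le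
    ((pow_le_pow_left₀ (norm_nonneg _)
        (norm_sum_le_sum_norm_sum_mul_apply_add_add_mul A B C D α β χ hβ) 2).trans
      (sq_sum_sum_sum_le_card_mul_sum_sum_sum_sq B C D fun b c d => T (b + c * d)))
    ((max_card_mul_sum_add_mul_le (fun v => sq_nonneg (T v)) B hC hD).trans
      (mul_le_mul_of_nonneg_left hT (by positivity)))
    (by positivity) (by positivity) (by positivity) fun hM => ?_
  rw [Nat.cast_eq_zero] at hM
  rw [show #B = 0 by omega, Nat.cast_zero, zero_mul, zero_mul]

theorem stmt12 {p : ℕ} [Fact p.Prime] (χ : MulChar (ZMod p) ℂ) (hχ : χ ≠ 1)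
    (A B C D : Finset (ZMod p)) (hA : (0 : ZMod p) ∉ A) (hB : (0 : ZMod p) ∉ B)
    (hC : (0 : ZMod p) ∉ C) (hD : (0 : ZMod p) ∉ D)
    (α : ZMod p → ℂ) (β : ZMod p → ZMod p → ZMod p → ℂ)
    (hα : ∀ a ∈ A, ‖α a‖ ≤ 1)
    (hβ : ∀ b ∈ B, ∀ c ∈ C, ∀ d ∈ D, ‖β b c d‖ ≤ 1) :
    ‖∑ a ∈ A, ∑ b ∈ B, ∑ c ∈ C, ∑ d ∈ D,
        α a * β b c d * χ (a + b + c * d)‖ ≤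
      (A.card : ℝ) * B.card * C.card * D.card *
        Real.sqrt ((p : ℝ) /
          ((A.card : ℝ) * (max (max B.card C.card) D.card : ℕ))) :=
  stmt12_general χ hχ A B C D hC hD α β hα hβ
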